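/- Let (C, τ^C) and (Θ, τ^Θ) be compact Hausdorff spaces, U : Θ × C → ℝ jointly continuous, u̲ : Θ → ℝ a reservation-utility function, and suppose there exists c* ∈ C with U(θ, c*) ≥ u̲(θ) for all θ ∈ Θ. Then the set of individually rational menus T := {D ∈ CL(C) : sup_{d ∈ D} U(θ, d) ≥ u̲(θ) for all θ ∈ Θ} is a nonempty compact subset of CL(C) with the Fell topology. -/

import Mathlib

/-- The hyperspace of nonempty closed subsets of a topological space. -/
def CL (C : Type*) [TopologicalSpace C] : Type _ :=
  {A : Set C // A.Nonempty ∧ IsClosed A}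

/-- The subbase for the Fell topology: all sets
`V⁻ = {A : A ∩ V ≠ ∅}` and `W⁺ = {A : A ⊆ W}` for `V`, `W` nonempty open. -/
def fellSubbasis (C : Type*) [TopologicalSpace C] : Set (Set (CL C)) :=
  {s | (∃ V : Set C, IsOpen V ∧ V.Nonempty ∧ s = {A : CL C | (A.1 ∩ V).Nonempty}) ∨
       (∃ W : Set C, IsOpen W ∧ W.Nonempty ∧ s = {A : CL C | A.1 ⊆ W})}

/-- The Fell topology on the hyperspace of nonempty closed subsets. -/
instance fellTopology (C : Type*) [TopologicalSpace C] : TopologicalSpace (CL C) :=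
  TopologicalSpace.generateFrom (fellSubbasis C)

/-- The agent's indirect utility over menus: `U*(θ, D) = sup_{d ∈ D} U(θ, d)`. -/
noncomputable def Ustar {Θ C : Type*} [TopologicalSpace C]
    (U : Θ × C → ℝ) (θ : Θ) (D : CL C) : ℝ :=
  sSup ((fun d => U (θ, d)) '' D.1)


/-- The set of individually rational menus:
`T = {D ∈ CL(C) : sup_{d ∈ D} U(θ, d) ≥ u̲(θ) for all θ}`. -/
noncomputable def menusIR {Θ C : Type*} [TopologicalSpace C]
    (U : Θ × C → ℝ) (ulow : Θ → ℝ) : Set (CL C) :=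
  {D : CL C | ∀ θ : Θ, ulow θ ≤ Ustar U θ D}

/-!
The menu `{c*}` is individually rational. For compactness, `CL C` is compact whenever `C` is:
by Alexander's subbasis theorem it suffices to refine covers by sets `V⁻` and `W⁺`, and the
closed set `K` missed by all the `V` of such a cover is either empty, so that finitely many `V`
cover `C`, or lies in some `W⁺` of the cover, so that finitely many `V` cover the compact set
`Wᶜ`. And `T` is closed: on a compact menu the supremum of `U(θ, ·)` is attained, so
`sup_{d ∈ D} U(θ, d) < u̲(θ)` says exactly `D ∈ W⁺` for the open set `W = {U(θ, ·) < u̲(θ)}`.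
-/

open Set

namespace CL

variable {C : Type*} [TopologicalSpace C]

theorem isOpen_setOf_subset {W : Set C} (hW : IsOpen W) : IsOpen {A : CL C | A.1 ⊆ W} := by
  rcases W.eq_empty_or_nonempty with rfl | hne
  · convert isOpen_empty
    exact eq_empty_of_forall_notMem fun A hA => A.2.1.ne_empty (subset_empty_iff.1 hA)
  · exact TopologicalSpace.isOpen_generateFrom_of_mem (Or.inr ⟨W, hW, hne, rfl⟩)

theorem exists_finite_forall_subset_or_inter_nonempty [CompactSpace C] {W : Set C}
    (hW : IsOpen W) {u : Set (Set C)} (hu : ∀ V ∈ u, IsOpen V) (hWu : Wᶜ ⊆ ⋃₀ u) :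
    ∃ T ⊆ u, T.Finite ∧ ∀ A : CL C, A.1 ⊆ W ∨ ∃ V ∈ T, (A.1 ∩ V).Nonempty := by
  rw [sUnion_eq_biUnion] at hWu
  obtain ⟨T, hTu, hT, hWT⟩ := hW.isClosed_compl.isCompact.elim_finite_subcover_image hu hWu
  refine ⟨T, hTu, hT, fun A => or_iff_not_imp_left.2 fun hAW => ?_⟩
  obtain ⟨x, hxA, hxW⟩ := not_subset.1 hAW
  obtain ⟨V, hVT, hxV⟩ := mem_iUnion₂.1 (hWT hxW)
  exact ⟨V, hVT, x, hxA, hxV⟩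

instance compactSpace [CompactSpace C] : CompactSpace (CL C) := by
  refine compactSpace_generateFrom rfl fun P hPS hP => ?_
  let u := {V : Set C | IsOpen V ∧ {A : CL C | (A.1 ∩ V).Nonempty} ∈ P}
  have finite_subcover {W : Set C} (hW : IsOpen W) (hWu : Wᶜ ⊆ ⋃₀ u)
      (hWP : {A : CL C | A.1 ⊆ W} ∈ P ∨ W = ∅) : ∃ Q ⊆ P, Q.Finite ∧ ⋃₀ Q = univ := by
    obtain ⟨T, hTu, hT, hcover⟩ :=
      exists_finite_forall_subset_or_inter_nonempty hW (fun V (hV : V ∈ u) => hV.1) hWu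
    refine ⟨insert {A : CL C | A.1 ⊆ W} ((fun V => {A : CL C | (A.1 ∩ V).Nonempty}) '' T) ∩ P,
      inter_subset_right, ((hT.image _).insert _).subset inter_subset_left, ?_⟩
    refine eq_univ_of_forall fun A => ?_
    rcases hcover A with hAW | ⟨V, hVT, hAV⟩
    · rcases hWP with hWP | rfl
      · exact ⟨_, ⟨mem_insert _ _, hWP⟩, hAW⟩
      · exact absurd (subset_empty_iff.1 hAW) A.2.1.ne_empty
    · exact ⟨_, ⟨mem_insert_of_mem _ (mem_image_of_mem _ hVT), (hTu hVT).2⟩, hAV⟩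
  rcases (⋃₀ u)ᶜ.eq_empty_or_nonempty with hK | hK
  · exact finite_subcover isOpen_empty (by simp [compl_empty_iff.1 hK]) (Or.inr rfl)
  obtain ⟨s, hsP, hKs⟩ := mem_sUnion.1 (hP ▸ mem_univ (⟨_, hK, (isOpen_sUnion
    fun V (hV : V ∈ u) => hV.1).isClosed_compl⟩ : CL C))
  rcases hPS hsP with ⟨V, hV, -, rfl⟩ | ⟨W, hW, -, rfl⟩
  · obtain ⟨x, hxK, hxV⟩ := hKs
    exact absurd (mem_sUnion_of_mem hxV (⟨hV, hsP⟩ : V ∈ u)) hxK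
  · exact finite_subcover hW (compl_subset_comm.1 hKs) (Or.inl hsP)

theorem isClosed_setOf_le_sSup_image {α : Type*} [ConditionallyCompleteLinearOrder α]
    [TopologicalSpace α] [OrderClosedTopology α] [CompactSpace C] {f : C → α}
    (hf : Continuous f) (r : α) : IsClosed {A : CL C | r ≤ sSup (f '' A.1)} := by
  have hcompl : {A : CL C | r ≤ sSup (f '' A.1)}ᶜ = {A : CL C | A.1 ⊆ {c | f c < r}} := by
    ext A
    rw [mem_compl_iff, mem_ofPred_eq, not_le]
    exact A.2.2.isCompact.sSup_lt_iff_of_continuous A.2.1 hf.continuousOn r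
  exact isOpen_compl_iff.1 (hcompl ▸ isOpen_setOf_subset (isOpen_lt hf continuous_const))

end CL

theorem isClosed_menusIR {Θ C : Type*} [TopologicalSpace C] [CompactSpace C]
    [TopologicalSpace Θ] {U : Θ × C → ℝ} (hU : Continuous U) (ulow : Θ → ℝ) :
    IsClosed (menusIR U ulow) := by
  have hUθ (θ : Θ) : Continuous fun c => U (θ, c) := hU.comp (.prodMk_right θ)
  simpa only [menusIR, Ustar, ofPred_forall] using
    isClosed_iInter fun θ => CL.isClosed_setOf_le_sSup_image (hUθ θ) (ulow θ)

theorem menusIR_nonempty_isCompact_general {Θ C : Type*}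
    [TopologicalSpace C] [CompactSpace C] [T2Space C]
    [TopologicalSpace Θ]
    (U : Θ × C → ℝ) (hU : Continuous U) (ulow : Θ → ℝ)
    (hIR : ∃ cstar : C, ∀ θ : Θ, ulow θ ≤ U (θ, cstar)) :
    (menusIR U ulow).Nonempty ∧ IsCompact (menusIR U ulow) := by
  obtain ⟨cstar, hcstar⟩ := hIR
  refine ⟨⟨⟨{cstar}, singleton_nonempty _, isClosed_singleton⟩, fun θ => ?_⟩,
    (isClosed_menusIR hU ulow).isCompact⟩
  simpa [Ustar] using hcstar θ

/-- If `C` and `Θ` are compact Hausdorff, `U : Θ × C → ℝ` is jointly continuous,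
`u̲ : Θ → ℝ` a reservation-utility function, and some contract `c*` satisfies
`U(θ, c*) ≥ u̲(θ)` for all `θ`, then the set `T` of individually rational menus is a
nonempty compact subset of `CL(C)` with the Fell topology. -/
theorem menusIR_nonempty_isCompact {Θ C : Type*}
    [TopologicalSpace C] [CompactSpace C] [T2Space C]
    [TopologicalSpace Θ] [CompactSpace Θ] [T2Space Θ]
    (U : Θ × C → ℝ) (hU : Continuous U) (ulow : Θ → ℝ)
    (hIR : ∃ cstar : C, ∀ θ : Θ, ulow θ ≤ U (θ, cstar)) :
    (menusIR U ulow).Nonempty ∧ IsCompact (menusIR U ulow) :=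
  menusIR_nonempty_isCompact_general U hU ulow hIR
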